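/- Let G be a finite group and C a union of conjugacy classes that is power-closed. Then every eigenvalue of Cay(G,C) is an integer. -/

import Mathlib

/-!
An eigenvalue `μ` of `Cay(G, C)` is a root of the characteristic polynomial of an integer
matrix, hence an algebraic integer, so it suffices to show that `μ` is rational.

Since `C` is a union of conjugacy classes, `∑_{x ∈ C} x` commutes with the regular
representation, so the `μ`-eigenspace `N` is a subrepresentation on which `∑_{x ∈ C} x` acts as
`μ`. Taking traces, `μ · dim N = ∑_{x ∈ C} χ_N(x)`. Power-closedness splits `C` into the sets of
generators of the cyclic subgroups `⟨x⟩`, and by Möbius inversion the sum of `χ_N` over the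
generators of `⟨x⟩` is an integer combination of the sums of `χ_N` over the subgroups `⟨x^d⟩`,
each of which is `|⟨x^d⟩|` times the dimension of the fixed space of `x^d`.
-/

/-- A subset `C` of a group is power-closed. -/
def IsPowerClosed {G : Type*} [Group G] (C : Finset G) : Prop :=
  ∀ x ∈ C, ∀ y : G, y ∈ Subgroup.zpowers x → Subgroup.zpowers y = Subgroup.zpowers x → y ∈ C

/-- The adjacency matrix of the Cayley digraph `Cay(G, C)`. -/
def cayleyAdj {G : Type*} [Group G] [Fintype G] [DecidableEq G] (C : Finset G) :
    Matrix G G ℂ := fun g h => if g * h⁻¹ ∈ C then 1 else 0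

open Finset ArithmeticFunction Module

theorem exists_intCast_sum_eq {ι R : Type*} [AddCommGroupWithOne R] {s : Finset ι} {f : ι → R}
    (h : ∀ i ∈ s, ∃ z : ℤ, f i = z) : ∃ z : ℤ, ∑ i ∈ s, f i = z :=
  Finset.sum_induction f (fun a => ∃ z : ℤ, a = z)
    (fun _ _ ⟨z₁, h₁⟩ ⟨z₂, h₂⟩ => ⟨z₁ + z₂, by rw [h₁, h₂, Int.cast_add]⟩) ⟨0, by simp⟩ h

namespace Nat

theorem sum_range_filter_dvd {M : Type*} [AddCommMonoid M] (f : ℕ → M) {d k : ℕ} (hd : d ∣ k) :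
    ∑ m ∈ range k with d ∣ m, f m = ∑ j ∈ range (k / d), f (d * j) := by
  obtain ⟨c, rfl⟩ := hd
  rcases d.eq_zero_or_pos with rfl | hd
  · simp
  rw [Nat.mul_div_cancel_left c hd,
    ← Finset.sum_image fun _ _ _ _ h => Nat.eq_of_mul_eq_mul_left hd h]
  congr 1
  ext m
  simp only [mem_filter, mem_range, mem_image]
  constructor
  · rintro ⟨hm, j, rfl⟩
    exact ⟨j, by nlinarith, rfl⟩
  · rintro ⟨j, hj, rfl⟩
    exact ⟨by nlinarith, dvd_mul_right d j⟩

theorem sum_divisors_filter_dvd_moebius {m k : ℕ} (hk : k ≠ 0) :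
    ∑ d ∈ k.divisors with d ∣ m, moebius d = if m.Coprime k then 1 else 0 := by
  have hgcd : k.divisors.filter (· ∣ m) = (m.gcd k).divisors := by
    ext d
    simp only [mem_filter, mem_divisors, Nat.dvd_gcd_iff]
    exact ⟨fun ⟨⟨hdk, _⟩, hdm⟩ => ⟨⟨hdm, hdk⟩, Nat.gcd_ne_zero_right hk⟩,
      fun ⟨⟨hdm, hdk⟩, _⟩ => ⟨⟨hdk, hk⟩, hdm⟩⟩
  rw [hgcd, ← coe_mul_zeta_apply, moebius_mul_coe_zeta, one_apply]

theorem sum_range_filter_coprime_eq_sum_moebius {M : Type*} [AddCommGroup M] (f : ℕ → M)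
    {k : ℕ} (hk : k ≠ 0) :
    ∑ m ∈ range k with m.Coprime k, f m =
      ∑ d ∈ k.divisors, moebius d • ∑ j ∈ range (k / d), f (d * j) := by
  calc ∑ m ∈ range k with m.Coprime k, f m
      = ∑ m ∈ range k, ∑ d ∈ k.divisors with d ∣ m, moebius d • f m := by
        simp_rw [← Finset.sum_smul, sum_divisors_filter_dvd_moebius hk, ite_smul, one_smul,
          zero_smul, Finset.sum_filter]
    _ = ∑ d ∈ k.divisors, moebius d • ∑ m ∈ range k with d ∣ m, f m := by
        simp_rw [Finset.sum_filter, Finset.smul_sum]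
        rw [Finset.sum_comm]
        simp_rw [smul_ite, smul_zero]
    _ = _ := by
        refine Finset.sum_congr rfl fun d hd => ?_
        rw [sum_range_filter_dvd f (Nat.dvd_of_mem_divisors hd)]

end Nat

namespace Module.End

variable {K V : Type*} [Field K] [AddCommGroup V] [Module K V] [FiniteDimensional K V]

theorem exists_trace_geom_sum_eq_mul {E : End K V} {e : ℕ} (he : (e : K) ≠ 0) (hE : E ^ e = 1) :
    ∃ r : ℕ, LinearMap.trace K V (∑ j ∈ range e, E ^ j) = e * r := by
  set Q := ∑ j ∈ range e, E ^ j
  have hQE : ∀ j, Q * E ^ j = Q := by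
    have hQE1 : Q * E = Q := by
      have := geom_sum_mul E e
      rwa [hE, sub_self, mul_sub, mul_one, sub_eq_zero] at this
    intro j
    induction j with
    | zero => rw [pow_zero, mul_one]
    | succ j ih => rw [pow_succ, ← mul_assoc, ih, hQE1]
  have hQQ : Q * Q = (e : K) • Q := by
    conv_lhs => rw [Finset.mul_sum]
    simp_rw [hQE, Finset.sum_const, card_range, Nat.cast_smul_eq_nsmul]
  -- `e⁻¹ • Q` is the projection onto the fixed vectors of `E`
  have hP : IsIdempotentElem ((e : K)⁻¹ • Q) := by
    rw [IsIdempotentElem, smul_mul_smul_comm, hQQ, smul_smul, mul_assoc, inv_mul_cancel₀ he,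
      mul_one]
  obtain ⟨p, hp⟩ := (LinearMap.isProj_iff_isIdempotentElem _).mpr hP
  refine ⟨finrank K p, ?_⟩
  rw [← hp.trace, map_smul, smul_eq_mul, mul_inv_cancel_left₀ he]

theorem exists_sum_trace_pow_coprime_eq_intCast [CharZero K] {D : End K V} {k : ℕ} (hk : k ≠ 0)
    (hD : D ^ k = 1) :
    ∃ z : ℤ, ∑ m ∈ range k with m.Coprime k, LinearMap.trace K V (D ^ m) = z := by
  rw [Nat.sum_range_filter_coprime_eq_sum_moebius _ hk]
  refine exists_intCast_sum_eq fun d hd => ?_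
  have hdk := Nat.dvd_of_mem_divisors hd
  have hE : (D ^ d) ^ (k / d) = 1 := by rw [← pow_mul, Nat.mul_div_cancel' hdk, hD]
  have he : ((k / d : ℕ) : K) ≠ 0 := Nat.cast_ne_zero.mpr <|
    (Nat.div_ne_zero_iff_of_dvd hdk).mpr ⟨hk, ne_zero_of_dvd_ne_zero hk hdk⟩
  obtain ⟨r, hr⟩ := exists_trace_geom_sum_eq_mul he hE
  refine ⟨moebius d * (k / d : ℕ) * r, ?_⟩
  simp_rw [pow_mul, ← map_sum, hr]
  simp only [Int.cast_mul, Int.cast_natCast, zsmul_eq_mul]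
  ring

end Module.End

open Subgroup

section PowerClosed

variable {G : Type*} [Group G]

theorem IsOfFinOrder.zpowers_eq_zpowers_iff_exists_coprime {x y : G} (hx : IsOfFinOrder x) :
    zpowers y = zpowers x ↔ ∃ m < orderOf x, m.Coprime (orderOf x) ∧ x ^ m = y := by
  constructor
  · intro h
    obtain ⟨n, rfl⟩ := hx.mem_powers_iff_mem_zpowers.mpr (h ▸ mem_zpowers y)
    refine ⟨n % orderOf x, Nat.mod_lt n hx.orderOf_pos, ?_, pow_mod_orderOf x n⟩
    rw [Nat.Coprime, ← Nat.gcd_rec, Nat.gcd_comm, ← mem_zpowers_pow_iff, h]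
    exact mem_zpowers x
  · rintro ⟨m, -, hm, rfl⟩
    exact le_antisymm (zpowers_le.mpr (npow_mem_zpowers x m))
      (zpowers_le.mpr (mem_zpowers_pow_iff.mpr hm))

theorem IsPowerClosed.sum_filter_zpowers_eq {M : Type*} [AddCommMonoid M] {C : Finset G}
    (hC : IsPowerClosed C) {x : G} (hx : x ∈ C) (hfin : IsOfFinOrder x)
    [DecidablePred (zpowers · = zpowers x)] (f : G → M) :
    ∑ y ∈ C with zpowers y = zpowers x, f y =
      ∑ m ∈ range (orderOf x) with m.Coprime (orderOf x), f (x ^ m) := by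
  symm
  refine Finset.sum_bij (fun m _ => x ^ m) (fun m hm => ?_) (fun m hm n hn h => ?_)
    (fun y hy => ?_) (fun _ _ => rfl)
  · have hgen := hfin.zpowers_eq_zpowers_iff_exists_coprime.mpr
      ⟨m, mem_range.mp (mem_filter.mp hm).1, (mem_filter.mp hm).2, rfl⟩
    exact mem_filter.mpr ⟨hC x hx _ (npow_mem_zpowers x m) hgen, hgen⟩
  · exact pow_injOn_Iio_orderOf (mem_range.mp (mem_filter.mp hm).1)
      (mem_range.mp (mem_filter.mp hn).1) h
  · obtain ⟨m, hm, hcop, rfl⟩ :=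
      hfin.zpowers_eq_zpowers_iff_exists_coprime.mp (mem_filter.mp hy).2
    exact ⟨m, mem_filter.mpr ⟨mem_range.mpr hm, hcop⟩, rfl⟩

end PowerClosed

namespace Representation

theorem exists_sum_trace_eq_intCast_of_isPowerClosed {K G V : Type*} [Field K]
    [CharZero K] [Group G] [Finite G] [AddCommGroup V] [Module K V] [FiniteDimensional K V]
    (ρ : Representation K G V) {C : Finset G} (hC : IsPowerClosed C) :
    ∃ z : ℤ, ∑ x ∈ C, LinearMap.trace K V (ρ x) = z := by
  classical
  rw [← Finset.sum_fiberwise_of_maps_to fun x hx => mem_image_of_mem zpowers hx]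
  refine exists_intCast_sum_eq fun H hH => ?_
  obtain ⟨x, hx, rfl⟩ := mem_image.mp hH
  have hfin := isOfFinOrder_of_finite x
  rw [hC.sum_filter_zpowers_eq hx hfin]
  simp_rw [map_pow]
  exact Module.End.exists_sum_trace_pow_coprime_eq_intCast hfin.orderOf_pos.ne'
    (by rw [← map_pow, pow_orderOf_eq_one, map_one])

theorem sum_commute_of_conj_mem {K G V : Type*} [CommSemiring K] [Group G] [AddCommMonoid V]
    [Module K V] (ρ : Representation K G V) {C : Finset G}
    (hC : ∀ g ∈ C, ∀ h : G, h * g * h⁻¹ ∈ C) (h : G) : Commute (∑ x ∈ C, ρ x) (ρ h) := by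
  rw [Commute, SemiconjBy, Finset.mul_sum, Finset.sum_mul]
  refine Finset.sum_equiv (MulAut.conj h⁻¹).toEquiv (fun x => ⟨fun hx => ?_, fun hx => ?_⟩)
    fun x _ => ?_
  · simpa using hC x hx h⁻¹
  · simpa [mul_assoc] using hC _ hx h
  · simp [← map_mul, mul_assoc]

theorem exists_mul_finrank_eigenspace_sum_eq_intCast {K G V : Type*} [Field K] [CharZero K]
    [Group G] [Finite G] [AddCommGroup V] [Module K V] [FiniteDimensional K V]
    (ρ : Representation K G V) {C : Finset G} (hconj : ∀ g ∈ C, ∀ h : G, h * g * h⁻¹ ∈ C)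
    (hC : IsPowerClosed C) (μ : K) :
    ∃ z : ℤ, μ * finrank K (End.eigenspace (∑ x ∈ C, ρ x) μ) = z := by
  let N : Subrepresentation ρ := ⟨End.eigenspace (∑ x ∈ C, ρ x) μ,
    fun g => End.mapsTo_genEigenspace_of_comm (ρ.sum_commute_of_conj_mem hconj g) μ 1⟩
  have hsum : ∑ x ∈ C, N.toRepresentation x = μ • 1 := by
    ext v
    have hv := End.mem_eigenspace_iff.mp v.2
    simpa [N, Subrepresentation.toRepresentation] using hv
  obtain ⟨z, hz⟩ := N.toRepresentation.exists_sum_trace_eq_intCast_of_isPowerClosed hC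
  refine ⟨z, ?_⟩
  rw [← hz, ← map_sum (LinearMap.trace K N.toSubmodule), hsum, map_smul, LinearMap.trace_one,
    smul_eq_mul]

end Representation

theorem Matrix.isIntegral_of_mem_spectrum_map {n R K : Type*} [Fintype n] [DecidableEq n]
    [CommRing R] [Field K] [Algebra R K] (A : Matrix n n R) {μ : K}
    (hμ : μ ∈ spectrum K (A.map (algebraMap R K))) : IsIntegral R μ := by
  rw [mem_spectrum_iff_isRoot_charpoly, charpoly_map] at hμ
  exact ⟨A.charpoly, A.charpoly_monic, by rwa [Polynomial.eval₂_eq_eval_map]⟩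

theorem exists_intCast_eq_of_isIntegral_of_mul_natCast_eq {K : Type*} [Field K] [CharZero K]
    {μ : K} (hμ : IsIntegral ℤ μ) {n : ℕ} (hn : n ≠ 0) {z : ℤ} (h : μ * n = z) :
    ∃ k : ℤ, μ = k := by
  have hq : μ = algebraMap ℚ K (z / n) := by
    rw [map_div₀, map_intCast, map_natCast, ← h,
      mul_div_cancel_right₀ _ (Nat.cast_ne_zero.mpr hn)]
  rw [hq, isIntegral_algebraMap_iff (algebraMap ℚ K).injective] at hμ
  obtain ⟨k, hk⟩ := IsIntegrallyClosed.isIntegral_iff.mp hμ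
  exact ⟨k, by rw [hq, ← hk, eq_intCast, map_intCast]⟩

def leftTranslation (K G : Type*) [CommSemiring K] [Group G] : Representation K G (G → K) where
  toFun x := LinearMap.funLeft K K (x⁻¹ * ·)
  map_one' := by ext; simp
  map_mul' x y := by ext; simp [mul_assoc]

@[simp]
theorem leftTranslation_apply {K G : Type*} [CommSemiring K] [Group G] (x : G) (w : G → K)
    (g : G) : leftTranslation K G x w g = w (x⁻¹ * g) :=
  rfl

section Cayley

variable {G : Type*} [Group G] [Fintype G] [DecidableEq G]

theorem toLin'_cayleyAdj (C : Finset G) :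
    (cayleyAdj C).toLin' = ∑ x ∈ C, leftTranslation ℂ G x := by
  refine LinearMap.ext fun w => funext fun g => ?_
  simp only [Matrix.toLin'_apply, Matrix.mulVec, dotProduct, cayleyAdj, ite_mul, one_mul,
    zero_mul, LinearMap.sum_apply, Finset.sum_apply, leftTranslation_apply]
  rw [← Finset.sum_filter]
  exact Finset.sum_nbij' (fun h => g * h⁻¹) (fun x => x⁻¹ * g) (by simp) (by simp) (by simp)
    (by simp) (by simp)

theorem cayleyAdj_eq_map_intCast (C : Finset G) :
    cayleyAdj C = (Matrix.of fun g h => if g * h⁻¹ ∈ C then 1 else 0 : Matrix G G ℤ).map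
      (algebraMap ℤ ℂ) := by
  ext g h
  simp [cayleyAdj, apply_ite]

end Cayley

/-- If `C` is a power-closed union of conjugacy classes, then every eigenvalue of
`Cay(G, C)` is an integer. -/
theorem stmt9 {G : Type*} [Group G] [Fintype G] [DecidableEq G] (C : Finset G)
    (hC : ∀ g ∈ C, ∀ h : G, h * g * h⁻¹ ∈ C)
    (hpc : IsPowerClosed C) :
    ∀ μ ∈ spectrum ℂ (cayleyAdj C), ∃ k : ℤ, μ = (k : ℂ) := by
  intro μ hμ
  have hint : IsIntegral ℤ μ := by
    rw [cayleyAdj_eq_map_intCast] at hμ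
    exact Matrix.isIntegral_of_mem_spectrum_map _ hμ
  have hev : End.HasEigenvalue (∑ x ∈ C, leftTranslation ℂ G x) μ := by
    rwa [End.hasEigenvalue_iff_mem_spectrum, ← toLin'_cayleyAdj, Matrix.spectrum_toLin']
  obtain ⟨z, hz⟩ :=
    (leftTranslation ℂ G).exists_mul_finrank_eigenspace_sum_eq_intCast hC hpc μ
  exact exists_intCast_eq_of_isIntegral_of_mul_natCast_eq hint
    (Submodule.finrank_eq_zero.not.mpr hev) hz
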